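/- arXiv:2301.08082 — 3 statements merged into one kernel-verified Lean document; each statement's English description precedes it below -/
import Mathlib

section
/- If the series Σ_{n≥0} |a_n| |g_n(c)| converges at some point c < x₀ with Δg(c) > 0, then there exists M > 0 such that |a_n| ≤ M^{n+1}/n! for all n ≥ 0. -/
open MeasureTheory Set Finset

/-- The jump of `g` at `x`: `Δg(x) = g(x⁺) − g(x)`. -/
noncomputable def jumpOf (g : ℝ → ℝ) (x : ℝ) : ℝ := Function.rightLim g x - g x

/-- Oriented Lebesgue–Stieltjes integral: `∫_a^b f dμ = ∫_{[a,b)} f dμ` if `a ≤ b`,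
`= −∫_{[b,a)} f dμ` otherwise. -/
noncomputable def ointeg (μ : MeasureTheory.Measure ℝ) (f : ℝ → ℝ) (a b : ℝ) : ℝ :=
  if a ≤ b then ∫ s in Set.Ico a b, f s ∂μ else - ∫ s in Set.Ico b a, f s ∂μ

/-- The `g`-monomials centered at `c`, defined from the Lebesgue–Stieltjes measure `μ` of `g`:
`g_0 ≡ 1`, `g_{n+1}(x) = (n+1) ∫_c^x g_n dμ` (oriented). -/
noncomputable def gMon (μ : MeasureTheory.Measure ℝ) (c : ℝ) : ℕ → ℝ → ℝ
  | 0 => fun _ => 1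
  | n + 1 => fun x => ((n : ℝ) + 1) * ointeg μ (gMon μ c n) c x


/-!
On `(-∞, x₀]` the monomial `g_n` has sign `(-1)^n`: `h_n = (-1)^n g_n` (`signedGMon`) is
nonnegative and antitone there, with `h_{n+1}(x) = (n+1) ∫_{[x, x₀)} h_n dμ`. Keeping only the
atom at `c` in that integral gives `h_{n+1}(c) ≥ (n+1) μ{c} h_n(c)`, hence `|g_n(c)| ≥ n! μ{c}^n ≥ n! Δg(c)^n`.
The terms of a convergent series are bounded, so `|a_n| ≤ C / (n! Δg(c)^n)`.
-/

open scoped Nat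

theorem isLocallyFiniteMeasure_of_measure_Ico_ne_top {μ : Measure ℝ}
    (hμ : ∀ a b : ℝ, a ≤ b → μ (Ico a b) ≠ ⊤) : IsLocallyFiniteMeasure μ :=
  ⟨fun x => ⟨Ioo (x - 1) (x + 1), Ioo_mem_nhds (by linarith) (by linarith),
    (measure_mono Set.Ioo_subset_Ico_self).trans_lt (hμ _ _ (by linarith)).lt_top⟩⟩

theorem integrableOn_Ico_of_antitoneOn {μ : Measure ℝ} {f : ℝ → ℝ} {a b : ℝ}
    (hf : AntitoneOn f (Icc a b)) (hμ : μ (Ico a b) ≠ ⊤) : IntegrableOn f (Ico a b) μ := by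
  refine ⟨(aemeasurable_restrict_of_antitoneOn measurableSet_Ico
    (hf.mono Ico_subset_Icc_self)).aestronglyMeasurable,
    HasFiniteIntegral.restrict_of_bounded (C := max |f b| |f a|) hμ.lt_top ?_⟩
  filter_upwards [ae_restrict_mem measurableSet_Ico] with s hs
  have hab : a ≤ b := hs.1.trans hs.2.le
  exact abs_le_max_abs_abs (hf ⟨hs.1, hs.2.le⟩ ⟨hab, le_rfl⟩ hs.2.le)
    (hf ⟨le_rfl, hab⟩ ⟨hs.1, hs.2.le⟩ hs.1)

theorem ofReal_jumpOf_le_measure_singleton {g : ℝ → ℝ} {μ : Measure ℝ} (hg : Monotone g)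
    (hμ : ∀ a b : ℝ, a ≤ b → μ (Ico a b) = ENNReal.ofReal (g b - g a)) (c : ℝ) :
    ENNReal.ofReal (jumpOf g c) ≤ μ {c} := by
  have hinter : ⋂ r > c, Ico c r = {c} := by
    ext x
    simp only [mem_iInter, Set.mem_Ico, mem_singleton_iff]
    refine ⟨fun h => le_antisymm (le_of_forall_gt fun r hr => (h r hr).2)
      (h (c + 1) (by linarith)).1, fun hx r hr => ⟨hx.ge, hx ▸ hr⟩⟩
  have hlim : Filter.Tendsto (fun r => μ (Ico c r)) (nhdsWithin c (Ioi c)) (nhds (μ {c})) := by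
    rw [← hinter]
    refine tendsto_measure_biInter_gt (fun r _ => nullMeasurableSet_Ico)
      (fun r s _ hrs => Ico_subset_Ico_right hrs) ⟨c + 1, by linarith, ?_⟩
    rw [hμ c (c + 1) (by linarith)]
    exact ENNReal.ofReal_ne_top
  refine ge_of_tendsto hlim ?_
  filter_upwards [self_mem_nhdsWithin] with r (hr : c < r)
  rw [hμ c r hr.le, jumpOf]
  exact ENNReal.ofReal_le_ofReal (sub_le_sub_right (hg.rightLim_le hr) _)

theorem jumpOf_le_measureReal_singleton {g : ℝ → ℝ} {μ : Measure ℝ} [IsLocallyFiniteMeasure μ]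
    (hg : Monotone g)
    (hμ : ∀ a b : ℝ, a ≤ b → μ (Ico a b) = ENNReal.ofReal (g b - g a)) (c : ℝ) :
    jumpOf g c ≤ μ.real {c} :=
  (ENNReal.ofReal_le_iff_le_toReal measure_singleton_lt_top.ne).1
    (ofReal_jumpOf_le_measure_singleton hg hμ c)

noncomputable def signedGMon (μ : Measure ℝ) (x₀ : ℝ) (n : ℕ) (x : ℝ) : ℝ :=
  (-1) ^ n * gMon μ x₀ n x

section signedGMon

variable {μ : Measure ℝ} {x₀ : ℝ}

theorem signedGMon_succ (n : ℕ) {x : ℝ} (hx : x ≤ x₀) :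
    signedGMon μ x₀ (n + 1) x = (n + 1) * ∫ s in Ico x x₀, signedGMon μ x₀ n s ∂μ := by
  rcases hx.eq_or_lt with rfl | hx
  · simp [signedGMon, gMon, ointeg]
  · simp only [signedGMon, gMon, ointeg, if_neg hx.not_ge, integral_const_mul, pow_succ]
    ring

theorem abs_gMon (n : ℕ) (x : ℝ) : |gMon μ x₀ n x| = |signedGMon μ x₀ n x| := by
  simp [signedGMon, abs_mul]

variable [IsLocallyFiniteMeasure μ]

theorem signedGMon_nonneg_and_antitoneOn (n : ℕ) :
    (∀ x ≤ x₀, 0 ≤ signedGMon μ x₀ n x) ∧ AntitoneOn (signedGMon μ x₀ n) (Iic x₀) := by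
  induction n with
  | zero =>
    exact ⟨fun _ _ => by simp [signedGMon, gMon], fun _ _ _ _ _ => by simp [signedGMon, gMon]⟩
  | succ n ih =>
    obtain ⟨hnonneg, hanti⟩ := ih
    have hint {x : ℝ} : IntegrableOn (signedGMon μ x₀ n) (Ico x x₀) μ :=
      integrableOn_Ico_of_antitoneOn (hanti.mono fun s hs => hs.2) measure_Ico_lt_top.ne
    have hpos {x : ℝ} : 0 ≤ᵐ[μ.restrict (Ico x x₀)] signedGMon μ x₀ n := by
      filter_upwards [ae_restrict_mem measurableSet_Ico] with s hs using hnonneg s hs.2.le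
    refine ⟨fun x hx => ?_, fun x hx y hy hxy => ?_⟩
    · rw [signedGMon_succ n hx]
      exact mul_nonneg (by positivity) (integral_nonneg_of_ae hpos)
    · rw [signedGMon_succ n hx, signedGMon_succ n hy]
      exact mul_le_mul_of_nonneg_left
        (setIntegral_mono_set hint hpos (Ico_subset_Ico_left hxy).eventuallyLE) (by positivity)

theorem factorial_mul_measureReal_pow_le_signedGMon {c : ℝ} (hc : c < x₀) (n : ℕ) :
    n ! * μ.real {c} ^ n ≤ signedGMon μ x₀ n c := by
  induction n with
  | zero => simp [signedGMon, gMon]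
  | succ n ih =>
    obtain ⟨hnonneg, hanti⟩ := signedGMon_nonneg_and_antitoneOn (μ := μ) (x₀ := x₀) n
    have hatom : μ.real {c} * signedGMon μ x₀ n c ≤ ∫ s in Ico c x₀, signedGMon μ x₀ n s ∂μ := by
      rw [← smul_eq_mul, ← integral_singleton]
      refine setIntegral_mono_set
        (integrableOn_Ico_of_antitoneOn (hanti.mono fun s hs => hs.2) measure_Ico_lt_top.ne) ?_
        (show {c} ⊆ Ico c x₀ from Set.singleton_subset_iff.2 ⟨le_rfl, hc⟩).eventuallyLE
      filter_upwards [ae_restrict_mem measurableSet_Ico] with s hs using hnonneg s hs.2.le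
    rw [signedGMon_succ n hc.le, Nat.factorial_succ, Nat.cast_mul, pow_succ]
    calc ((n + 1 : ℕ) : ℝ) * n ! * (μ.real {c} ^ n * μ.real {c})
        = (n + 1) * (μ.real {c} * (n ! * μ.real {c} ^ n)) := by push_cast; ring
      _ ≤ (n + 1) * (μ.real {c} * signedGMon μ x₀ n c) := by gcongr
      _ ≤ (n + 1) * ∫ s in Ico c x₀, signedGMon μ x₀ n s ∂μ := by gcongr

end signedGMon

theorem exists_norm_le_pow_div_factorial_of_summable {E : Type*} [SeminormedAddCommGroup E]
    {a : ℕ → E} {b : ℕ → ℝ} {d : ℝ} (hd : 0 < d) (hb : ∀ n, n ! * d ^ n ≤ b n)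
    (ha : Summable fun n => ‖a n‖ * b n) :
    ∃ M > (0 : ℝ), ∀ n : ℕ, ‖a n‖ ≤ M ^ (n + 1) / (n ! : ℝ) := by
  set C := ∑' n, ‖a n‖ * b n
  have hterm (n : ℕ) : ‖a n‖ * (n ! * d ^ n) ≤ ‖a n‖ * b n :=
    mul_le_mul_of_nonneg_left (hb n) (norm_nonneg _)
  have hbound (n : ℕ) : ‖a n‖ * (n ! * d ^ n) ≤ C :=
    (hterm n).trans (ha.le_tsum n fun i _ => (by positivity : (0 : ℝ) ≤ _).trans (hterm i))
  refine ⟨max C d⁻¹, lt_max_of_lt_right (inv_pos.2 hd), fun n => ?_⟩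
  rw [le_div_iff₀ (by positivity), pow_succ']
  calc ‖a n‖ * n ! = ‖a n‖ * (n ! * d ^ n) * d⁻¹ ^ n := by rw [inv_pow]; field_simp
    _ ≤ C * d⁻¹ ^ n := by gcongr; exact hbound n
    _ ≤ max C d⁻¹ * max C d⁻¹ ^ n := by gcongr; exacts [le_max_left _ _, le_max_right _ _]

theorem stmt16_general {𝕜 : Type*} [RCLike 𝕜] (g : ℝ → ℝ) (μ : MeasureTheory.Measure ℝ)
    (hg : Monotone g)
    (hμ : ∀ a b : ℝ, a ≤ b → μ (Set.Ico a b) = ENNReal.ofReal (g b - g a))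
    (x₀ c : ℝ) (hc : c < x₀) (hjump : 0 < jumpOf g c)
    (a : ℕ → 𝕜) (ha : Summable (fun n : ℕ => ‖a n‖ * |gMon μ x₀ n c|)) :
    ∃ M > (0 : ℝ), ∀ n : ℕ, ‖a n‖ ≤ M ^ (n + 1) / (Nat.factorial n : ℝ) := by
  have : IsLocallyFiniteMeasure μ := isLocallyFiniteMeasure_of_measure_Ico_ne_top
    fun a b hab => hμ a b hab ▸ ENNReal.ofReal_ne_top
  refine exists_norm_le_pow_div_factorial_of_summable hjump (fun n => ?_) ha
  calc (n ! : ℝ) * jumpOf g c ^ n ≤ n ! * μ.real {c} ^ n := by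
        gcongr; exact jumpOf_le_measureReal_singleton hg hμ c
    _ ≤ signedGMon μ x₀ n c := factorial_mul_measureReal_pow_le_signedGMon hc n
    _ = |gMon μ x₀ n c| := by
        rw [abs_gMon, abs_of_nonneg ((signedGMon_nonneg_and_antitoneOn n).1 c hc.le)]

/-- If `Σ |aₙ| |gₙ(c)|` converges at some `c < x₀` which is a discontinuity point of `g`
(`Δg(c) > 0`), then there is `M > 0` with `|aₙ| ≤ M^{n+1}/n!` for all `n`. -/
theorem stmt16 {𝕜 : Type*} [RCLike 𝕜] (g : ℝ → ℝ) (μ : MeasureTheory.Measure ℝ)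
    (hg : Monotone g) (hlc : ∀ x : ℝ, ContinuousWithinAt g (Set.Iio x) x)
    (hμ : ∀ a b : ℝ, a ≤ b → μ (Set.Ico a b) = ENNReal.ofReal (g b - g a))
    (x₀ c : ℝ) (hc : c < x₀) (hjump : 0 < jumpOf g c)
    (a : ℕ → 𝕜) (ha : Summable (fun n : ℕ => ‖a n‖ * |gMon μ x₀ n c|)) :
    ∃ M > (0 : ℝ), ∀ n : ℕ, ‖a n‖ ≤ M ^ (n + 1) / (Nat.factorial n : ℝ) :=
  stmt16_general g μ hg hμ x₀ c hc hjump a ha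
end

section
/- Let g be a derivator with g^C = 0 and x₀ ∈ ℝ. Then for every λ and every x ≥ x₀, the exponential series exp_g(λ;x₀)(x) = Σ_{n≥0} λ^n g_n(x)/n! equals the (unconditionally convergent) infinite product Π_{y ∈ [x₀,x) ∩ D_g} (1 + λ Δg(y)). -/
/-!
Let `w` be the jump function `Δg` restricted to `[x₀, x)`. Its finite sums are bounded by
`g x - g x₀`, so `w` is summable and `∏ (1 + λ w y)` converges unconditionally to the sum, over
all finite sets `s` of jumps, of `∏_{y ∈ s} λ Δg(y)`; grouping the sets by cardinality gives
`∑ λⁿ eₙ(x)`, where `eₙ(s)` is the `n`-th elementary symmetric sum of the jumps in `[x₀, s)`.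
Since `g^C = 0`, the measure `μ` on `[x₀, s)` is carried by the jumps, so the defining recursion
becomes `g_{n+1}(s) = (n+1) ∑_{y < s} Δg(y) gₙ(y)`. Splitting an `(n+1)`-set of jumps at its
largest element shows that `n! eₙ` satisfies the same recursion, hence `gₙ(x) / n! = eₙ(x)`.
-/

open MeasureTheory Set Finset

/-- The `n`-th elementary symmetric function of an infinite family (junk value `0` when the
products over `n`-sets are not summable). -/
noncomputable def tsumEsymm {ι R : Type*} [CommSemiring R] [TopologicalSpace R] (f : ι → R)
    (n : ℕ) : R :=
  ∑' s : {s : Finset ι // s.card = n}, ∏ i ∈ s.1, f i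

section Esymm

variable {ι R : Type*}

theorem tsumEsymm_zero [CommSemiring R] [TopologicalSpace R] (f : ι → R) : tsumEsymm f 0 = 1 := by
  have hempty : ∀ s : {s : Finset ι // s.card = 0}, s = ⟨∅, rfl⟩ :=
    fun s => Subtype.ext (card_eq_zero.1 s.2)
  rw [tsumEsymm, tsum_eq_single ⟨∅, rfl⟩ fun s hs => absurd (hempty s) hs, Finset.prod_empty]

theorem tsumEsymm_const_mul [Field R] [TopologicalSpace R] [IsTopologicalRing R] [T2Space R]
    (c : R) (f : ι → R) (n : ℕ) : tsumEsymm (fun i => c * f i) n = c ^ n * tsumEsymm f n := by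
  rw [tsumEsymm, tsumEsymm, ← tsum_mul_left]
  exact tsum_congr fun s => by rw [prod_mul_distrib, prod_const, s.2]

theorem tsumEsymm_ofReal {𝕜 : Type*} [RCLike 𝕜] (f : ι → ℝ) (n : ℕ) :
    tsumEsymm (fun i => (f i : 𝕜)) n = tsumEsymm f n := by
  simp only [tsumEsymm, RCLike.ofReal_tsum, RCLike.ofReal_prod]

theorem tsumEsymm_mono {f g : ι → ℝ} (hf : 0 ≤ f) (hfg : f ≤ g) (hg : Summable g) (n : ℕ) :
    tsumEsymm f n ≤ tsumEsymm g n :=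
  ((summable_finsetProd_of_summable_nonneg hf (hg.of_nonneg_of_le hf hfg)).subtype _).tsum_le_tsum
    (fun _ => prod_le_prod (fun i _ => hf i) (fun i _ => hfg i))
    ((summable_finsetProd_of_summable_nonneg (fun i => (hf i).trans (hfg i)) hg).subtype _)

theorem hasProd_one_add_tsum_tsumEsymm [NormedCommRing R] [NormOneClass R] [CompleteSpace R]
    {f : ι → R} (hf : Summable fun i => ‖f i‖) :
    HasProd (fun i => 1 + f i) (∑' n, tsumEsymm f n) := by
  have h := (summable_finsetProd_of_summable_norm hf).hasSum
  rw [show ∑' n, tsumEsymm f n = ∑' s, ∏ i ∈ s, f i from (h.tsum_fiberwise card).tsum_eq]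
  exact hasProd_one_add_of_hasSum_prod h

end Esymm

section Ordered

variable {ι : Type*} [LinearOrder ι]

/-- A finset of size `n + 1` is its maximum `y` together with a finset of size `n` below `y`. -/
def Finset.sigmaLtEquivCardSucc (n : ℕ) :
    (Σ y : ι, {s : {s : Finset ι // s.card = n} // ∀ z ∈ s.1, z < y}) ≃
      {s : Finset ι // s.card = n + 1} where
  toFun p := ⟨insert p.1 p.2.1.1, by
    rw [card_insert_of_notMem fun h => (p.2.2 _ h).false, p.2.1.2]⟩
  invFun s :=
    have hs : s.1.Nonempty := card_pos.1 (by rw [s.2]; omega)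
    ⟨s.1.max' hs, ⟨s.1.erase (s.1.max' hs), by rw [card_erase_of_mem (max'_mem _ hs), s.2]; rfl⟩,
      fun z hz => lt_of_le_of_ne (le_max' _ z (mem_of_mem_erase hz)) (ne_of_mem_erase hz)⟩
  left_inv := by
    rintro ⟨y, ⟨s, hs⟩, hlt⟩
    have hmax : ∀ h, (insert y s).max' h = y := fun h =>
      le_antisymm
        (max'_le _ _ _ fun z hz => (mem_insert.1 hz).elim le_of_eq fun hz => (hlt z hz).le)
        (le_max' _ _ (mem_insert_self y s))
    ext
    · exact hmax (insert_nonempty y s)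
    · simp only [hmax, erase_insert fun h => (hlt y h).false]
  right_inv s := Subtype.ext (insert_erase (max'_mem _ (card_pos.1 (by rw [s.2]; omega))))

theorem tsum_forall_lt_eq_tsumEsymm_indicator_Iio {R : Type*} [CommSemiring R]
    [TopologicalSpace R] (a : ι → R) (y : ι) (n : ℕ) :
    ∑' t : {t : {t : Finset ι // t.card = n} // ∀ z ∈ t.1, z < y},
        ∏ i ∈ t.1.1, (Iio y).indicator a i
      = tsumEsymm ((Iio y).indicator a) n := by
  refine tsum_subtype_eq_of_support_subset (f := fun t : {t : Finset ι // t.card = n} =>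
    ∏ i ∈ t.1, (Iio y).indicator a i) fun t ht z hz => ?_
  by_contra hzy
  exact ht (prod_eq_zero hz (indicator_of_notMem (show z ∉ Iio y from hzy) a))

theorem tsumEsymm_indicator_Iio_succ {R : Type*} [NormedCommRing R] [NormOneClass R]
    [CompleteSpace R] {a : ι → R} {s : ι} (ha : Summable fun i => ‖(Iio s).indicator a i‖)
    (n : ℕ) :
    tsumEsymm ((Iio s).indicator a) (n + 1)
      = ∑' y, (Iio s).indicator a y * tsumEsymm ((Iio y).indicator a) n := by
  set b := (Iio s).indicator a
  set E := Finset.sigmaLtEquivCardSucc (ι := ι) n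
  have hterm : ∀ p, ∏ i ∈ (E p).1, b i = b p.1 * ∏ i ∈ p.2.1.1, (Iio p.1).indicator a i := by
    rintro ⟨y, ⟨t, -⟩, hlt⟩
    rw [show (E ⟨y, ⟨t, _⟩, hlt⟩).1 = insert y t from rfl, prod_insert fun h => (hlt y h).false]
    by_cases hys : y < s
    · refine congrArg _ (prod_congr rfl fun z hz => ?_)
      simp only [b]
      rw [indicator_of_mem (show z ∈ Iio s from (hlt z hz).trans hys),
        indicator_of_mem (show z ∈ Iio y from hlt z hz)]
    · simp only [b, indicator_of_notMem (show y ∉ Iio s from hys), zero_mul]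
  have hsig : Summable fun p : Σ y : ι, {t : {t : Finset ι // t.card = n} // ∀ z ∈ t.1, z < y} =>
      b p.1 * ∏ i ∈ p.2.1.1, (Iio p.1).indicator a i :=
    (((summable_finsetProd_of_summable_norm ha).subtype _).comp_injective E.injective).congr hterm
  calc tsumEsymm b (n + 1) = ∑' p, ∏ i ∈ (E p).1, b i := (E.tsum_eq _).symm
    _ = ∑' p, b p.1 * ∏ i ∈ p.2.1.1, (Iio p.1).indicator a i := tsum_congr hterm
    _ = ∑' y, ∑' t : {t : {t : Finset ι // t.card = n} // ∀ z ∈ t.1, z < y},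
          b y * ∏ i ∈ t.1.1, (Iio y).indicator a i := hsig.tsum_sigma
    _ = ∑' y, b y * tsumEsymm ((Iio y).indicator a) n := tsum_congr fun y => by
      by_cases hys : y < s
      · have hy : Summable fun i => ‖(Iio y).indicator a i‖ := by
          refine ha.of_nonneg_of_le (fun _ => norm_nonneg _) fun i => ?_
          simp only [b, norm_indicator_eq_indicator_norm]
          exact indicator_le_indicator_of_subset (Iio_subset_Iio hys.le) (fun _ => norm_nonneg _) i
        rw [Summable.tsum_mul_left, tsum_forall_lt_eq_tsumEsymm_indicator_Iio]
        exact ((summable_finsetProd_of_summable_norm hy).subtype _).subtype _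
      · simp only [b, indicator_of_notMem (show y ∉ Iio s from hys), zero_mul, tsum_zero]

theorem biInter_gt_Ico_self [NoMaxOrder ι] (y : ι) : ⋂ r > y, Ico y r = {y} := by
  ext z
  simp only [mem_iInter, Set.mem_Ico, mem_singleton_iff]
  obtain ⟨r, hr⟩ := exists_gt y
  exact ⟨fun h => le_antisymm (le_of_forall_gt fun r hr => (h r hr).2) (h r hr).1,
    fun hz r hr => ⟨hz.ge, hz ▸ hr⟩⟩

end Ordered

theorem gMon_succ_of_le (μ : Measure ℝ) (c : ℝ) (n : ℕ) {s : ℝ} (h : c ≤ s) :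
    gMon μ c (n + 1) s = (n + 1) * ∫ t in Ico c s, gMon μ c n t ∂μ := by
  show _ * ointeg _ _ _ _ = _
  rw [ointeg, if_pos h]

section Stieltjes

variable {g : ℝ → ℝ} {μ : Measure ℝ}

theorem jumpOf_nonneg (hg : Monotone g) (y : ℝ) : 0 ≤ jumpOf g y :=
  sub_nonneg.2 (hg.le_rightLim le_rfl)

variable (hg : Monotone g) (hμ : ∀ a b : ℝ, a ≤ b → μ (Ico a b) = ENNReal.ofReal (g b - g a))
include hg hμ

theorem measure_singleton_eq_jumpOf (y : ℝ) : μ {y} = ENNReal.ofReal (jumpOf g y) := by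
  have hlim := tendsto_measure_biInter_gt (μ := μ) (s := fun r => Ico y r) (a := y)
    (fun _ _ => measurableSet_Ico.nullMeasurableSet) (fun _ _ _ hij => Ico_subset_Ico_right hij)
    ⟨y + 1, by linarith, by rw [hμ _ _ (by linarith)]; exact ENNReal.ofReal_ne_top⟩
  rw [biInter_gt_Ico_self] at hlim
  refine tendsto_nhds_unique hlim
    (((ENNReal.continuous_ofReal.tendsto _).comp
      ((hg.tendsto_rightLim y).sub_const (g y))).congr' ?_)
  filter_upwards [self_mem_nhdsWithin] with r hr
  exact (hμ y r (le_of_lt hr)).symm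

theorem sum_jumpOf_le {a b : ℝ} (hab : a ≤ b) (u : Finset ℝ) (hu : ↑u ⊆ Ico a b) :
    ∑ y ∈ u, jumpOf g y ≤ g b - g a := by
  have hsum : ∑ y ∈ u, μ {y} = μ u := sum_measure_singleton
  simp_rw [measure_singleton_eq_jumpOf hg hμ,
    ← ENNReal.ofReal_sum_of_nonneg fun y _ => jumpOf_nonneg hg y] at hsum
  rw [← ENNReal.ofReal_le_ofReal_iff (sub_nonneg.2 (hg hab)), hsum, ← hμ a b hab]
  exact measure_mono hu

theorem summable_indicator_jumpOf {a b : ℝ} (hab : a ≤ b) :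
    Summable ((Ico a b).indicator (jumpOf g)) := by
  refine summable_of_sum_le (c := g b - g a)
    (indicator_nonneg fun y _ => jumpOf_nonneg hg y) fun u => ?_
  simp only [indicator_apply, ← sum_filter]
  exact sum_jumpOf_le hg hμ hab _ fun y hy => (mem_filter.1 hy).2

theorem setIntegral_Ico_eq_tsum_jumpOf
    (hpure : ∀ a b : ℝ, a ≤ b → g b - g a = ∑' t : Ico a b, jumpOf g t)
    {a b : ℝ} (hab : a ≤ b) {f : ℝ → ℝ} (hf : IntegrableOn f (Ico a b) μ) :
    ∫ y in Ico a b, f y ∂μ = ∑' y, (Ico a b).indicator (jumpOf g) y * f y := by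
  set w := (Ico a b).indicator (jumpOf g)
  have hw : Summable w := summable_indicator_jumpOf hg hμ hab
  have hw0 : 0 ≤ w := indicator_nonneg fun y _ => jumpOf_nonneg hg y
  have hJ : (Function.support w).Countable := hw.countable_support
  have hJsub : Function.support w ⊆ Ico a b := support_indicator_subset
  have hatom : ∀ y ∈ Function.support w, μ {y} = ENNReal.ofReal (w y) := fun y hy => by
    rw [measure_singleton_eq_jumpOf hg hμ, show w y = jumpOf g y from indicator_of_mem (hJsub hy) _]
  -- `hpure` says that the atoms already exhaust the mass of `Ico a b`.
  have hμJ : μ (Function.support w) = μ (Ico a b) := by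
    have hsum : ∑' y : Function.support w, μ {(y : ℝ)} = μ (Function.support w) :=
      tsum_measure_preimage_singleton hJ (f := id) fun y _ => measurableSet_singleton y
    calc μ (Function.support w) = ∑' y : Function.support w, ENNReal.ofReal (w y) :=
          hsum.symm.trans (tsum_congr fun y => hatom y y.2)
      _ = ENNReal.ofReal (∑' y : Function.support w, w y) :=
          (ENNReal.ofReal_tsum_of_nonneg (fun y : Function.support w => hw0 y) (hw.subtype _)).symm
      _ = μ (Ico a b) := by
          rw [tsum_subtype_eq_of_support_subset subset_rfl, hμ a b hab, hpure a b hab,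
            _root_.tsum_subtype]
  have hae : Function.support w =ᵐ[μ] Ico a b :=
    ae_eq_of_subset_of_measure_ge hJsub hμJ.ge hJ.measurableSet.nullMeasurableSet
      (by rw [hμ a b hab]; exact ENNReal.ofReal_ne_top)
  rw [← setIntegral_congr_set hae, setIntegral_countable f hJ (hf.mono_set hJsub)]
  refine (tsum_congr fun y => ?_).trans
    (tsum_subtype_eq_of_support_subset (Function.support_mul_subset_left w f))
  rw [measureReal_def, hatom y y.2, ENNReal.toReal_ofReal (hw0 y), smul_eq_mul]

theorem monotoneOn_tsumEsymm_indicator_Ico (x₀ : ℝ) (n : ℕ) :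
    MonotoneOn (fun s => tsumEsymm ((Ico x₀ s).indicator (jumpOf g)) n) (Ici x₀) :=
  fun _ _ _ hs' hss' => tsumEsymm_mono (indicator_nonneg fun y _ => jumpOf_nonneg hg y)
    (indicator_le_indicator_of_subset (Ico_subset_Ico_right hss') fun y => jumpOf_nonneg hg y)
    (summable_indicator_jumpOf hg hμ hs') n

theorem integrableOn_tsumEsymm_indicator_Ico {x₀ s : ℝ} (hs : x₀ ≤ s) (n : ℕ) :
    IntegrableOn (fun y => tsumEsymm ((Ico x₀ y).indicator (jumpOf g)) n) (Ico x₀ s) μ := by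
  have hfin : μ (Icc x₀ s) ≠ ⊤ := ne_top_of_le_ne_top
    (by rw [hμ x₀ (s + 1) (by linarith)]; exact ENNReal.ofReal_ne_top)
    (measure_mono (Icc_subset_Ico_right (by linarith)))
  exact (((monotoneOn_tsumEsymm_indicator_Ico hg hμ x₀ n).mono Icc_subset_Ici_self
    ).integrableOn_of_measure_ne_top (isLeast_Icc hs) (isGreatest_Icc hs) hfin measurableSet_Icc
    ).mono_set Ico_subset_Icc_self

theorem gMon_eq_factorial_mul_tsumEsymm
    (hpure : ∀ a b : ℝ, a ≤ b → g b - g a = ∑' t : Ico a b, jumpOf g t) (x₀ : ℝ) (n : ℕ)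
    {s : ℝ} (hs : x₀ ≤ s) :
    gMon μ x₀ n s = n.factorial * tsumEsymm ((Ico x₀ s).indicator (jumpOf g)) n := by
  induction n generalizing s with
  | zero => simp [gMon, tsumEsymm_zero]
  | succ n ih =>
    have hint : IntegrableOn (gMon μ x₀ n) (Ico x₀ s) μ :=
      IntegrableOn.congr_fun ((integrableOn_tsumEsymm_indicator_Ico hg hμ hs n).const_mul _)
        (fun y hy => (ih hy.1).symm) measurableSet_Ico
    have hind : ∀ y, (Iio y).indicator ((Ici x₀).indicator (jumpOf g))
        = (Ico x₀ y).indicator (jumpOf g) :=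
      fun y => by rw [indicator_indicator, Iio_inter_Ici]
    have hsum : Summable fun y => ‖(Iio s).indicator ((Ici x₀).indicator (jumpOf g)) y‖ := by
      rw [hind]
      exact (summable_indicator_jumpOf hg hμ hs).abs
    have hterm : ∀ y, (Ico x₀ s).indicator (jumpOf g) y * gMon μ x₀ n y
        = n.factorial * ((Ico x₀ s).indicator (jumpOf g) y
          * tsumEsymm ((Ico x₀ y).indicator (jumpOf g)) n) := fun y => by
      by_cases hy : y ∈ Ico x₀ s
      · rw [ih hy.1]
        ring
      · simp only [indicator_of_notMem hy, zero_mul, mul_zero]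
    rw [gMon_succ_of_le μ x₀ n hs, setIntegral_Ico_eq_tsum_jumpOf hg hμ hpure hs hint, ← hind,
      tsumEsymm_indicator_Iio_succ hsum]
    simp_rw [hind]
    rw [tsum_congr hterm, tsum_mul_left, Nat.factorial_succ]
    push_cast
    ring

end Stieltjes

theorem stmt17_general {𝕜 : Type*} [RCLike 𝕜] (g : ℝ → ℝ) (μ : MeasureTheory.Measure ℝ)
    (hg : Monotone g)
    (hμ : ∀ a b : ℝ, a ≤ b → μ (Set.Ico a b) = ENNReal.ofReal (g b - g a))
    (hpure : ∀ a b : ℝ, a ≤ b → g b - g a = ∑' t : (Set.Ico a b), jumpOf g (t : ℝ))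
    (x₀ : ℝ) (l : 𝕜) :
    ∀ x : ℝ, x₀ ≤ x →
      HasProd (fun y : {y : ℝ // 0 < jumpOf g y ∧ y ∈ Set.Ico x₀ x} =>
          1 + l * ((jumpOf g (y : ℝ) : ℝ) : 𝕜))
        (∑' n : ℕ, l ^ n * ((gMon μ x₀ n x : ℝ) : 𝕜) / ((Nat.factorial n : ℝ) : 𝕜)) := by
  intro x hx
  set w := (Ico x₀ x).indicator (jumpOf g)
  have hw0 : 0 ≤ w := indicator_nonneg fun y _ => jumpOf_nonneg hg y
  have hnorm : Summable fun y => ‖l * (w y : 𝕜)‖ := by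
    simpa only [norm_mul, RCLike.norm_ofReal, abs_of_nonneg (hw0 _)] using
      (summable_indicator_jumpOf hg hμ hx).mul_left ‖l‖
  have hcoef : ∀ n, tsumEsymm (fun y => l * (w y : 𝕜)) n
      = l ^ n * (gMon μ x₀ n x : 𝕜) / (n.factorial : ℝ) := fun n => by
    rw [tsumEsymm_const_mul, tsumEsymm_ofReal,
      gMon_eq_factorial_mul_tsumEsymm hg hμ hpure x₀ n hx, RCLike.ofReal_mul, mul_div_assoc,
      mul_div_cancel_left₀ _ (RCLike.ofReal_ne_zero.2 (by positivity))]
  have hsupp : Function.mulSupport (fun y => 1 + l * (w y : 𝕜))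
      ⊆ {y | 0 < jumpOf g y ∧ y ∈ Ico x₀ x} := fun y hy => by
    have hwy : w y ≠ 0 := fun h => hy (by simp [h])
    have hyI : y ∈ Ico x₀ x := support_indicator_subset hwy
    refine ⟨(jumpOf_nonneg hg y).lt_of_ne fun h => hwy ?_, hyI⟩
    rw [show w y = jumpOf g y from indicator_of_mem hyI _, h]
  have hprod := hasProd_one_add_tsum_tsumEsymm hnorm
  rw [tsum_congr hcoef, ← hasProd_subtype_iff_of_mulSupport_subset hsupp] at hprod
  exact hprod.congr_fun fun y => by simp only [Function.comp_apply, w, indicator_of_mem y.2.2]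

/-- For a purely atomic derivator (`g^C = 0`, i.e. the increment of `g` on any `[a,b)` is the
sum of its jumps there), the exponential series `Σ λⁿ gₙ(x)/n!` equals, for `x ≥ x₀`, the
unconditionally convergent product `Π_{y ∈ D_g ∩ [x₀,x)} (1 + λ Δg(y))`. -/
theorem stmt17 {𝕜 : Type*} [RCLike 𝕜] (g : ℝ → ℝ) (μ : MeasureTheory.Measure ℝ)
    (hg : Monotone g) (hlc : ∀ x : ℝ, ContinuousWithinAt g (Set.Iio x) x)
    (hμ : ∀ a b : ℝ, a ≤ b → μ (Set.Ico a b) = ENNReal.ofReal (g b - g a))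
    (hpure : ∀ a b : ℝ, a ≤ b → g b - g a = ∑' t : (Set.Ico a b), jumpOf g (t : ℝ))
    (x₀ : ℝ) (l : 𝕜) :
    ∀ x : ℝ, x₀ ≤ x →
      HasProd (fun y : {y : ℝ // 0 < jumpOf g y ∧ y ∈ Set.Ico x₀ x} =>
          1 + l * ((jumpOf g (y : ℝ) : ℝ) : 𝕜))
        (∑' n : ℕ, l ^ n * ((gMon μ x₀ n x : ℝ) : 𝕜) / ((Nat.factorial n : ℝ) : 𝕜)) :=
  stmt17_general g μ hg hμ hpure x₀ l
end

section
/- Fix λ ≠ 0. For all t ∈ ℝ, s in the domain of absolute convergence Ω_t of exp_g(λ;t), and x ∈ Ω_s: x ∈ Ω_t and exp_g(λ;t)(s) · exp_g(λ;s)(x) = exp_g(λ;t)(x) (semigroup/cocycle property of the Stieltjes exponential series). -/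
open MeasureTheory Set Finset

/-- The Stieltjes exponential series centered at `c`: `exp_g(λ;c)(x) = Σ λⁿ g_{c,n}(x)/n!`. -/
noncomputable def gExp {𝕜 : Type*} [RCLike 𝕜] (μ : MeasureTheory.Measure ℝ)
    (l : 𝕜) (c x : ℝ) : 𝕜 :=
  ∑' n : ℕ, l ^ n * ((gMon μ c n x : ℝ) : 𝕜) / ((Nat.factorial n : ℝ) : 𝕜)

/-- `x` lies in the domain `Ω_c` of absolute convergence of `exp_g(λ;c)`. -/
def gExpAbsConv {𝕜 : Type*} [RCLike 𝕜] (μ : MeasureTheory.Measure ℝ)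
    (l : 𝕜) (c x : ℝ) : Prop :=
  Summable (fun n : ℕ => ‖l‖ ^ n * |gMon μ c n x| / (Nat.factorial n : ℝ))

/-!
Write `h_{c,n} = g_{c,n} / n!`, so that `h_{c,0} = 1` and `h_{c,n+1} = ∫_c^· h_{c,n} dμ`.
Splitting `∫_t^x = ∫_t^s + ∫_s^x` and inducting on `n` gives the binomial identity
`h_{t,n}(x) = ∑_{i+j=n} h_{t,i}(s) h_{s,j}(x)`. The cocycle property is then the Cauchy product
of the absolutely convergent series `∑ λⁱ h_{t,i}(s)` and `∑ λʲ h_{s,j}(x)`.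
-/

section OrientedIntegral

variable {μ : Measure ℝ}

lemma setIntegral_Ico_add_Ico {f : ℝ → ℝ} {a b c : ℝ} (hab : a ≤ b) (hbc : b ≤ c)
    (hfab : IntegrableOn f (Ico a b) μ) (hfbc : IntegrableOn f (Ico b c) μ) :
    ∫ y in Ico a c, f y ∂μ = (∫ y in Ico a b, f y ∂μ) + ∫ y in Ico b c, f y ∂μ := by
  rw [← Ico_union_Ico_eq_Ico hab hbc,
    setIntegral_union Ico_disjoint_Ico_same measurableSet_Ico hfab hfbc]

lemma ointeg_add_adjacent {f : ℝ → ℝ} (hf : ∀ a b : ℝ, IntegrableOn f (Ico a b) μ)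
    (a b c : ℝ) : ointeg μ f a b + ointeg μ f b c = ointeg μ f a c := by
  have key : ∀ {x y z : ℝ}, x ≤ y → y ≤ z → _ :=
    fun hxy hyz => setIntegral_Ico_add_Ico hxy hyz (hf _ _) (hf _ _)
  unfold ointeg
  split_ifs <;> first
    | linarith [key (x := a) (y := b) (z := c) (by linarith) (by linarith)]
    | linarith [key (x := a) (y := c) (z := b) (by linarith) (by linarith)]
    | linarith [key (x := b) (y := a) (z := c) (by linarith) (by linarith)]
    | linarith [key (x := b) (y := c) (z := a) (by linarith) (by linarith)]
    | linarith [key (x := c) (y := a) (z := b) (by linarith) (by linarith)]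
    | linarith [key (x := c) (y := b) (z := a) (by linarith) (by linarith)]

lemma ointeg_const_mul (r : ℝ) (f : ℝ → ℝ) (a b : ℝ) :
    ointeg μ (fun y => r * f y) a b = r * ointeg μ f a b := by
  unfold ointeg
  split_ifs <;> simp only [integral_const_mul, mul_neg]

lemma ointeg_finset_sum {ι : Type*} (s : Finset ι) {f : ι → ℝ → ℝ}
    (hf : ∀ i ∈ s, ∀ a b : ℝ, IntegrableOn (f i) (Ico a b) μ) (a b : ℝ) :
    ointeg μ (fun y => ∑ i ∈ s, f i y) a b = ∑ i ∈ s, ointeg μ (f i) a b := by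
  unfold ointeg
  split_ifs
  · exact integral_finsetSum s fun i hi => hf i hi a b
  · rw [integral_finsetSum s fun i hi => hf i hi b a, Finset.sum_neg_distrib]

lemma measurable_ointeg [SFinite μ] {f : ℝ → ℝ} (hf : Measurable f) (c : ℝ) :
    Measurable (ointeg μ f c) := by
  have hIco : ∀ u : ℝ → ℝ, ∀ v : ℝ → ℝ, Measurable u → Measurable v →
      Measurable fun x => ∫ y in Ico (u x) (v x), f y ∂μ := by
    intro u v hu hv
    simp_rw [← integral_indicator measurableSet_Ico]
    refine (StronglyMeasurable.integral_prod_right (f := fun x y => (Ico (u x) (v x)).indicator f y)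
      ?_).measurable
    refine Measurable.stronglyMeasurable ?_
    have hset : MeasurableSet {p : ℝ × ℝ | p.2 ∈ Ico (u p.1) (v p.1)} :=
      (measurableSet_le (hu.comp measurable_fst) measurable_snd).inter
        (measurableSet_lt measurable_snd (hv.comp measurable_fst))
    exact (hf.comp measurable_snd).indicator hset
  exact Measurable.ite measurableSet_Ici (hIco _ _ measurable_const measurable_id)
    (hIco _ _ measurable_id measurable_const).neg

lemma abs_ointeg_le {f : ℝ → ℝ} {A B c x : ℝ} (hf : IntegrableOn f (Ico A B) μ)
    (hc : c ∈ Icc A B) (hx : x ∈ Icc A B) :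
    |ointeg μ f c x| ≤ ∫ y in Ico A B, |f y| ∂μ := by
  have hsub : ∀ {u v : ℝ}, A ≤ u → v ≤ B → |∫ y in Ico u v, f y ∂μ| ≤ ∫ y in Ico A B, |f y| ∂μ :=
    fun hu hv => (abs_integral_le_integral_abs).trans <| setIntegral_mono_set hf.abs
      (.of_forall fun _ => abs_nonneg _) (Ico_subset_Ico hu hv).eventuallyLE
  unfold ointeg
  split_ifs
  · exact hsub hc.1 hx.2
  · exact (abs_neg _).trans_le (hsub hx.1 hc.2)

lemma integrableOn_ointeg [IsLocallyFiniteMeasure μ] {f : ℝ → ℝ} (hf : Measurable f)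
    (hfi : ∀ a b : ℝ, IntegrableOn f (Ico a b) μ) (c a b : ℝ) :
    IntegrableOn (ointeg μ f c) (Ico a b) μ :=
  Measure.integrableOn_of_bounded (M := ∫ y in Ico (min c a) (max c b), |f y| ∂μ)
    measure_Ico_lt_top.ne (measurable_ointeg hf c).aestronglyMeasurable
    (ae_restrict_of_forall_mem measurableSet_Ico fun _ hx =>
      abs_ointeg_le (hfi _ _) ⟨min_le_left _ _, le_max_left _ _⟩
        ⟨(min_le_right _ _).trans hx.1, hx.2.le.trans (le_max_right _ _)⟩)

end OrientedIntegral

noncomputable def gMonDivFact (μ : Measure ℝ) (c : ℝ) (n : ℕ) (x : ℝ) : ℝ :=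
  gMon μ c n x / (Nat.factorial n : ℝ)

section Monomials

variable {μ : Measure ℝ}

lemma gMonDivFact_zero (c : ℝ) : gMonDivFact μ c 0 = fun _ => 1 := by
  ext; simp [gMonDivFact, gMon]

lemma gMonDivFact_succ (c : ℝ) (n : ℕ) :
    gMonDivFact μ c (n + 1) = ointeg μ (gMonDivFact μ c n) c := by
  have hdiv : gMonDivFact μ c n = fun y => (Nat.factorial n : ℝ)⁻¹ * gMon μ c n y := by
    ext; simp only [gMonDivFact, div_eq_inv_mul]
  ext x
  rw [hdiv, ointeg_const_mul, gMonDivFact, gMon, Nat.factorial_succ]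
  push_cast
  field_simp

lemma measurable_gMonDivFact [SFinite μ] (c : ℝ) (n : ℕ) : Measurable (gMonDivFact μ c n) := by
  induction n with
  | zero => rw [gMonDivFact_zero]; exact measurable_const
  | succ n ih => rw [gMonDivFact_succ]; exact measurable_ointeg ih c

lemma integrableOn_gMonDivFact [IsLocallyFiniteMeasure μ] (c : ℝ) (n : ℕ) (a b : ℝ) :
    IntegrableOn (gMonDivFact μ c n) (Ico a b) μ := by
  induction n generalizing a b with
  | zero => rw [gMonDivFact_zero]; exact integrableOn_const measure_Ico_lt_top.ne
  | succ n ih =>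
    rw [gMonDivFact_succ]
    exact integrableOn_ointeg (measurable_gMonDivFact c n) ih c a b

lemma gMonDivFact_eq_sum_antidiagonal [IsLocallyFiniteMeasure μ] (t s : ℝ) (n : ℕ) (x : ℝ) :
    gMonDivFact μ t n x =
      ∑ p ∈ antidiagonal n, gMonDivFact μ t p.1 s * gMonDivFact μ s p.2 x := by
  induction n generalizing x with
  | zero => simp [gMonDivFact_zero]
  | succ n ih =>
    have hI := integrableOn_gMonDivFact (μ := μ)
    calc gMonDivFact μ t (n + 1) x
        = ointeg μ (gMonDivFact μ t n) t s + ointeg μ (gMonDivFact μ t n) s x := by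
          rw [gMonDivFact_succ, ointeg_add_adjacent (hI t n)]
      _ = gMonDivFact μ t (n + 1) s +
            ∑ p ∈ antidiagonal n, gMonDivFact μ t p.1 s * gMonDivFact μ s (p.2 + 1) x := by
          congr 1
          · rw [gMonDivFact_succ]
          · rw [funext ih, ointeg_finset_sum
              (f := fun (p : ℕ × ℕ) y => gMonDivFact μ t p.1 s * gMonDivFact μ s p.2 y) _
              fun p _ a b => (hI s p.2 a b).const_mul _]
            simp only [ointeg_const_mul, gMonDivFact_succ]
      _ = ∑ p ∈ antidiagonal (n + 1), gMonDivFact μ t p.1 s * gMonDivFact μ s p.2 x := by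
          rw [Finset.Nat.sum_antidiagonal_succ', gMonDivFact_zero, mul_one]

end Monomials

section Series

variable {𝕜 : Type*} [RCLike 𝕜] {μ : Measure ℝ}

lemma gExp_eq_tsum (l : 𝕜) (c x : ℝ) :
    gExp μ l c x = ∑' n : ℕ, l ^ n * (gMonDivFact μ c n x : 𝕜) := by
  simp only [gExp, gMonDivFact, RCLike.ofReal_div, mul_div_assoc]

lemma gExpAbsConv_iff_summable_norm (l : 𝕜) (c x : ℝ) :
    gExpAbsConv μ l c x ↔ Summable fun n : ℕ => ‖l ^ n * (gMonDivFact μ c n x : 𝕜)‖ := by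
  simp only [gExpAbsConv, gMonDivFact, norm_mul, norm_pow, RCLike.norm_ofReal, abs_div,
    Nat.abs_cast, mul_div_assoc]

lemma sum_antidiagonal_gExp_terms [IsLocallyFiniteMeasure μ] (l : 𝕜) (t s x : ℝ) (n : ℕ) :
    ∑ p ∈ antidiagonal n, (l ^ p.1 * (gMonDivFact μ t p.1 s : 𝕜)) *
        (l ^ p.2 * (gMonDivFact μ s p.2 x : 𝕜)) = l ^ n * (gMonDivFact μ t n x : 𝕜) := by
  rw [gMonDivFact_eq_sum_antidiagonal t s, RCLike.ofReal_sum, mul_sum]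
  refine sum_congr rfl fun p hp => ?_
  rw [← mem_antidiagonal.1 hp, pow_add]
  push_cast
  ring

end Series

theorem stmt18_general {𝕜 : Type*} [RCLike 𝕜] (g : ℝ → ℝ) (μ : MeasureTheory.Measure ℝ)
    (hμ : ∀ a b : ℝ, a ≤ b → μ (Set.Ico a b) = ENNReal.ofReal (g b - g a))
    (l : 𝕜) :
    ∀ t s x : ℝ, gExpAbsConv μ l t s → gExpAbsConv μ l s x →
      gExpAbsConv μ l t x ∧ gExp μ l t s * gExp μ l s x = gExp μ l t x := by
  intro t s x hts hsx
  have : IsLocallyFiniteMeasure μ :=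
    ⟨fun y => ⟨Ico (y - 1) (y + 1), Ico_mem_nhds (by linarith) (by linarith), by
      rw [hμ _ _ (by linarith)]; exact ENNReal.ofReal_lt_top⟩⟩
  rw [gExpAbsConv_iff_summable_norm] at hts hsx ⊢
  simp only [gExp_eq_tsum]
  refine ⟨?_, ?_⟩
  · simpa only [sum_antidiagonal_gExp_terms] using
      summable_norm_sum_mul_antidiagonal_of_summable_norm hts hsx
  · rw [tsum_mul_tsum_eq_tsum_sum_antidiagonal_of_summable_norm hts hsx]
    exact tsum_congr (sum_antidiagonal_gExp_terms l t s x)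

/-- Cocycle/semigroup property of the Stieltjes exponential series: for `λ ≠ 0`, all `t`,
all `s ∈ Ω_t` and `x ∈ Ω_s`, one has `x ∈ Ω_t` and
`exp_g(λ;t)(s) · exp_g(λ;s)(x) = exp_g(λ;t)(x)`. -/
theorem stmt18 {𝕜 : Type*} [RCLike 𝕜] (g : ℝ → ℝ) (μ : MeasureTheory.Measure ℝ)
    (hg : Monotone g) (hlc : ∀ x : ℝ, ContinuousWithinAt g (Set.Iio x) x)
    (hμ : ∀ a b : ℝ, a ≤ b → μ (Set.Ico a b) = ENNReal.ofReal (g b - g a))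
    (l : 𝕜) (hl : l ≠ 0) :
    ∀ t s x : ℝ, gExpAbsConv μ l t s → gExpAbsConv μ l s x →
      gExpAbsConv μ l t x ∧ gExp μ l t s * gExp μ l s x = gExp μ l t x :=
  stmt18_general g μ hμ l
end
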